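/- Let 𝒫 and 𝒬 be finite graded posets and let φ : 𝒫 → 𝒬 be a surjective order-preserving map that preserves rank. Then for every k and all g, h ∈ I_φ(𝒫): φ_*(g ∗_k h) = φ_*g ∗_k φ_*h. -/

import Mathlib

open scoped BigOperators InnerProductSpace Pointwise

noncomputable section

/-- Euclidean space `ℝ^d`. -/
abbrev Euc (d : ℕ) : Type := EuclideanSpace ℝ (Fin d)

namespace GramAngles

variable {d : ℕ}

/-- The conical (positive) hull of a set. -/
def posHull (S : Set (Euc d)) : Set (Euc d) :=
  {u | ∃ c : ℝ, ∃ p ∈ S, 0 ≤ c ∧ u = c • p}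

/-- The dimension of a set: the rank of the linear subspace parallel to its affine hull. -/
def sdim (S : Set (Euc d)) : ℕ := Module.finrank ℝ (vectorSpan ℝ S)

/-- A polyhedral cone with apex at the origin: a finitely generated convex cone. -/
def IsPolyhedralCone (C : Set (Euc d)) : Prop :=
  ∃ (n : ℕ) (v : Fin n → Euc d),
    C = {x | ∃ c : Fin n → ℝ, (∀ i, 0 ≤ c i) ∧ x = ∑ i, c i • v i}

/-- A cone angle on `ℝ^d`: a simple, normalized valuation on polyhedral cones. -/
structure ConeAngle (d : ℕ) where
  toFun : Set (Euc d) → ℝ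
  zero' : toFun {0} = 0
  union' : ∀ C C' : Set (Euc d), IsPolyhedralCone C → IsPolyhedralCone C' →
    IsPolyhedralCone (C ∪ C') → IsPolyhedralCone (C ∩ C') →
    toFun (C ∪ C') = toFun C + toFun C' - toFun (C ∩ C')
  simple' : ∀ C : Set (Euc d), IsPolyhedralCone C → sdim C < d → toFun C = 0
  norm' : toFun Set.univ = 1

/-- A (convex) polytope: the convex hull of a nonempty finite point set. -/
def IsPolytope (P : Set (Euc d)) : Prop :=
  ∃ s : Finset (Euc d), s.Nonempty ∧ P = convexHull ℝ (s : Set (Euc d))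

/-- Faces of a polytope are its exposed subsets (including `∅` and `P` itself). -/
def IsFace (P F : Set (Euc d)) : Prop := IsExposed ℝ P F

open Classical in
/-- A chosen point in the relative interior of `F`. -/
def relPt (F : Set (Euc d)) : Euc d :=
  if h : (intrinsicInterior ℝ F).Nonempty then h.some else 0

/-- The tangent (inner) cone `T_F G = cone(-q + G) + L(G)^⊥`, `q ∈ relint F`. -/
def innerCone (F G : Set (Euc d)) : Set (Euc d) :=
  posHull ((fun x => x - relPt F) '' G) + (((vectorSpan ℝ G)ᗮ : Submodule ℝ (Euc d)) : Set (Euc d))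

/-- The normal cone `N_F G` of `G` at a face `F`. -/
def normalCone (F G : Set (Euc d)) : Set (Euc d) :=
  {c | ∀ x ∈ F, ∀ y ∈ G, ⟪c, y⟫_ℝ ≤ ⟪c, x⟫_ℝ}

/-- The outer cone `O_F G = N_F G + L(F)`. -/
def outerCone (F G : Set (Euc d)) : Set (Euc d) :=
  normalCone F G + ((vectorSpan ℝ F : Submodule ℝ (Euc d)) : Set (Euc d))

/-- Interior angle of `G` at its face `F`, measured by the cone angle `α`. -/
def intAngle (α : ConeAngle d) (F G : Set (Euc d)) : ℝ := α.toFun (innerCone F G)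

/-- Exterior angle of `G` at its face `F`, measured by the cone angle `α`. -/
def extAngle (α : ConeAngle d) (F G : Set (Euc d)) : ℝ := α.toFun (outerCone F G)

/-- `α̂_i(P)`: sum of interior angles over all `i`-dimensional (nonempty) faces of `P`. -/
def intAngleSum (α : ConeAngle d) (P : Set (Euc d)) (i : ℕ) : ℝ :=
  ∑ᶠ F ∈ {F : Set (Euc d) | IsFace P F ∧ F.Nonempty ∧ sdim F = i}, intAngle α F P

/-- `α̌_i(P)`: sum of exterior angles over all `i`-dimensional (nonempty) faces of `P`. -/
def extAngleSum (α : ConeAngle d) (P : Set (Euc d)) (i : ℕ) : ℝ :=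
  ∑ᶠ F ∈ {F : Set (Euc d) | IsFace P F ∧ F.Nonempty ∧ sdim F = i}, extAngle α F P

/-- A zonotope: a translate of a Minkowski sum of finitely many segments. -/
def IsZonotope (Z : Set (Euc d)) : Prop :=
  ∃ (t : Euc d) (n : ℕ) (z : Fin n → Euc d),
    Z = {x | ∃ l : Fin n → ℝ, (∀ i, |l i| ≤ 1) ∧ x = t + ∑ i, l i • z i}

/-- The face of `P` on which the linear functional `⟪c, ·⟫` is maximized. -/
def maxFace (P : Set (Euc d)) (c : Euc d) : Set (Euc d) :=
  {x ∈ P | ∀ y ∈ P, ⟪c, y⟫_ℝ ≤ ⟪c, x⟫_ℝ}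

/-- A belt polytope: a polytope whose normal fan is the fan induced by a central
hyperplane arrangement (two functionals maximize the same face iff they have the
same sign pattern with respect to the arrangement). -/
def IsBeltPolytope (P : Set (Euc d)) : Prop :=
  IsPolytope P ∧ ∃ (k : ℕ) (z : Fin k → Euc d), (∀ i, z i ≠ 0) ∧
    ∀ c c' : Euc d,
      ((∀ i, Real.sign ⟪z i, c⟫_ℝ = Real.sign ⟪z i, c'⟫_ℝ) ↔ maxFace P c = maxFace P c')

/-- The set of flats of a polytope: linear subspaces parallel to nonempty faces,
ordered by inclusion (as a subtype of `Submodule ℝ (Euc d)`). -/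
def Flats (P : Set (Euc d)) : Set (Submodule ℝ (Euc d)) :=
  {L | ∃ F : Set (Euc d), IsFace P F ∧ F.Nonempty ∧ L = vectorSpan ℝ F}

/-- Strictly increasing chains from `a` to `c` in a poset, encoded as lists. -/
def chainsFromTo {β : Type*} [Preorder β] (a c : β) : Set (List β) :=
  {l | l.Chain' (· < ·) ∧ l.head? = some a ∧ l.getLast? = some c}

/-- The Möbius function of a poset, via Philip Hall's chain formula. -/
def mob {β : Type*} [Preorder β] (a c : β) : ℝ :=
  ∑ᶠ l ∈ chainsFromTo a c, (-1 : ℝ) ^ (l.length + 1)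

/-- Whitney numbers of the first kind of a ranked poset with minimum `bot`. -/
def whitney1 {β : Type*} [Preorder β] (rk : β → ℕ) (bot : β) (i : ℕ) : ℝ :=
  ∑ᶠ a ∈ {a : β | rk a = i}, mob bot a

/-- Flag-Whitney numbers of the second kind: the number of chains with rank set `S`. -/
def flagW2 {β : Type*} [Preorder β] (rk : β → ℕ) (S : Finset ℕ) : ℕ :=
  Nat.card {l : List β // l.Chain' (· < ·) ∧ l.map rk = S.sort (· ≤ ·)}

/-- Flag-Whitney numbers of the first kind:
`w_S = Σ μ(0̂,c₁) μ(c₁,c₂) ⋯ μ(c_{k-1},c_k)` over chains with rank set `S`. -/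
def flagW1 {β : Type*} [Preorder β] (rk : β → ℕ) (bot : β) (S : Finset ℕ) : ℝ :=
  ∑ᶠ l ∈ {l : List β | l.Chain' (· < ·) ∧ l.map rk = S.sort (· ≤ ·)},
    (List.zipWith mob (bot :: l) l).prod

/-- Chains of nonempty faces of `P` whose dimensions are exactly the set `S`. -/
def faceChains (P : Set (Euc d)) (S : Finset ℕ) : Set (List (Set (Euc d))) :=
  {l | (∀ F ∈ l, IsFace P F ∧ F.Nonempty) ∧ l.Chain' (· ⊂ ·) ∧ l.map sdim = S.sort (· ≤ ·)}

/-- The interior flag-angle `α̂_S(P) = Σ α̂(F₁,F₂) α̂(F₂,F₃) ⋯ α̂(F_k,P)`. -/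
def intFlag (α : ConeAngle d) (P : Set (Euc d)) (S : Finset ℕ) : ℝ :=
  ∑ᶠ l ∈ faceChains P S, (List.zipWith (intAngle α) l (l.drop 1 ++ [P])).prod

/-- The exterior flag-angle `α̌_S(P) = Σ α̌(F₁,F₂) α̌(F₂,F₃) ⋯ α̌(F_k,P)`. -/
def extFlag (α : ConeAngle d) (P : Set (Euc d)) (S : Finset ℕ) : ℝ :=
  ∑ᶠ l ∈ faceChains P S, (List.zipWith (extAngle α) l (l.drop 1 ++ [P])).prod

/-- Membership in the incidence algebra: vanishing off the order relation. -/
def memIA {β : Type*} [Preorder β] (h : β → β → ℝ) : Prop :=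
  ∀ a c, ¬ a ≤ c → h a c = 0

/-- Convolution product of the incidence algebra. -/
def conv {β : Type*} [Preorder β] (g h : β → β → ℝ) (a c : β) : ℝ :=
  ∑ᶠ (b : β) (_ : a ≤ b ∧ b ≤ c), g a b * h b c

/-- The product `∗_k`, summing over middle elements of rank `k`. -/
def convk {β : Type*} (rk : β → ℕ) (k : ℕ) (g h : β → β → ℝ) (a c : β) : ℝ :=
  ∑ᶠ (b : β) (_ : rk b = k), g a b * h b c

/-- The pushforward `φ_* h (q,q') = |φ⁻¹(q')|⁻¹ Σ_{p ∈ φ⁻¹(q), p' ∈ φ⁻¹(q')} h(p,p')`. -/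
def pushf {β γ : Type*} (φ : β → γ) (h : β → β → ℝ) (q q' : γ) : ℝ :=
  (Nat.card {p : β // φ p = q'} : ℝ)⁻¹ *
    ∑ᶠ (p : β) (_ : φ p = q) (p' : β) (_ : φ p' = q'), h p p'

/-- The subspace `I_φ(𝒫)`: elements whose fiberwise column sums are independent of
the representative of the target fiber. -/
def memIphi {β γ : Type*} [Preorder β] (φ : β → γ) (h : β → β → ℝ) : Prop :=
  memIA h ∧ ∀ (q : γ) (p₁ p₂ : β), φ p₁ = φ p₂ →
    (∑ᶠ (p : β) (_ : φ p = q), h p p₁) = (∑ᶠ (p : β) (_ : φ p = q), h p p₂)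

open Classical in
/-- The pullback `φ^* g (p,p') = g(φ p, φ p')` for `p ≤ p'`, else `0`. -/
def pullb {β γ : Type*} [Preorder β] (φ : β → γ) (g : γ → γ → ℝ) (p p' : β) : ℝ :=
  if p ≤ p' then g (φ p) (φ p') else 0

open Classical in
/-- The identity `δ` of the incidence algebra. -/
def deltaIA {β : Type*} (a c : β) : ℝ := if a = c then 1 else 0

end GramAngles

namespace GramAngles

private lemma finsum_cond' {α : Type*} [Fintype α] (P : α → Prop) [DecidablePred P]
    (f : α → ℝ) :
    (∑ᶠ (b : α) (_ : P b), f b) = ∑ b ∈ Finset.univ.filter P, f b :=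
  finsum_cond_eq_sum_of_cond_iff f (fun _ => by simp)

private lemma pushf_eq' {β γ : Type*} [Fintype β] [DecidableEq γ] (φ : β → γ)
    (h : β → β → ℝ) (q q' : γ) :
    pushf φ h q q' = (Nat.card {p : β // φ p = q'} : ℝ)⁻¹ *
      ∑ p ∈ Finset.univ.filter (fun p => φ p = q),
        ∑ p' ∈ Finset.univ.filter (fun p => φ p = q'), h p p' := by
  unfold pushf
  congr 1
  rw [finsum_cond']
  exact Finset.sum_congr rfl fun p _ => finsum_cond' _ _

private lemma convk_eq' {β : Type*} [Fintype β] (rk : β → ℕ) (k : ℕ)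
    [DecidablePred (fun b => rk b = k)] (g h : β → β → ℝ) (a c : β) :
    convk rk k g h a c = ∑ b ∈ Finset.univ.filter (fun b => rk b = k), g a b * h b c :=
  finsum_cond' _ _

/-- Corollary: `φ_*` respects the products `∗_k`.
For a surjective, order- and rank-preserving map `φ : 𝒫 → 𝒬` of finite graded posets
(with rank functions `rkb`, `rkc` increasing by one along covers), every `k` and all
`g, h ∈ I_φ(𝒫)`: `φ_*(g ∗_k h) = φ_* g ∗_k φ_* h`. -/
theorem statement11 {β γ : Type*} [Fintype β] [Fintype γ] [PartialOrder β] [PartialOrder γ]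
    (φ : β → γ) (hsurj : Function.Surjective φ) (hmono : Monotone φ)
    (rkb : β → ℕ) (rkc : γ → ℕ)
    (hgb : ∀ a b : β, a ⋖ b → rkb b = rkb a + 1)
    (hgc : ∀ a b : γ, a ⋖ b → rkc b = rkc a + 1)
    (hrk : ∀ p : β, rkc (φ p) = rkb p) (k : ℕ)
    (g h : β → β → ℝ) (hg : memIphi φ g) (hh : memIphi φ h) (q q' : γ) :
    pushf φ (convk rkb k g h) q q' = convk rkc k (pushf φ g) (pushf φ h) q q' := by
  classical
  -- notation
  set Fq := Finset.univ.filter (fun p : β => φ p = q) with hFq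
  set Fq' := Finset.univ.filter (fun p : β => φ p = q') with hFq'
  set Rk := Finset.univ.filter (fun b : β => rkb b = k) with hRk
  set Tk := Finset.univ.filter (fun r : γ => rkc r = k) with hTk
  have card_fiber : ∀ r : γ,
      (Nat.card {p : β // φ p = r} : ℝ) =
        ((Finset.univ.filter (fun p : β => φ p = r)).card : ℝ) := by
    intro r
    rw [Nat.card_eq_fintype_card, Fintype.card_subtype]
  have fiber_ne : ∀ r : γ,
      ((Finset.univ.filter (fun p : β => φ p = r)).card : ℝ) ≠ 0 := by
    intro r
    obtain ⟨b0, hb0⟩ := hsurj r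
    have : b0 ∈ Finset.univ.filter (fun p : β => φ p = r) := by simp [hb0]
    have := Finset.card_pos.mpr ⟨b0, this⟩
    positivity
  rw [pushf_eq', convk_eq']
  -- rewrite LHS inner sums
  have lhs_eq :
      (∑ p ∈ Fq, ∑ p' ∈ Fq', convk rkb k g h p p') =
      ∑ r ∈ Tk, ∑ b ∈ Finset.univ.filter (fun p : β => φ p = r),
        (∑ p ∈ Fq, g p b) * (∑ p' ∈ Fq', h b p') := by
    have h1 : (∑ p ∈ Fq, ∑ p' ∈ Fq', convk rkb k g h p p') =
        ∑ b ∈ Rk, (∑ p ∈ Fq, g p b) * (∑ p' ∈ Fq', h b p') := by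
      simp only [convk_eq' rkb k g h]
      calc (∑ p ∈ Fq, ∑ p' ∈ Fq', ∑ b ∈ Rk, g p b * h b p')
          = ∑ p ∈ Fq, ∑ b ∈ Rk, ∑ p' ∈ Fq', g p b * h b p' :=
            Finset.sum_congr rfl fun p _ => Finset.sum_comm
        _ = ∑ b ∈ Rk, ∑ p ∈ Fq, ∑ p' ∈ Fq', g p b * h b p' := Finset.sum_comm
        _ = ∑ b ∈ Rk, (∑ p ∈ Fq, g p b) * (∑ p' ∈ Fq', h b p') :=
            Finset.sum_congr rfl fun b _ => (Finset.sum_mul_sum _ _ _ _).symm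
    rw [h1, ← Finset.sum_fiberwise_of_maps_to (g := φ) (t := Tk)]
    · apply Finset.sum_congr rfl
      intro r hr
      apply Finset.sum_congr _ (fun _ _ => rfl)
      ext b
      simp only [hRk, hTk, Finset.mem_filter, Finset.mem_univ, true_and] at hr ⊢
      constructor
      · rintro ⟨-, hb⟩; exact hb
      · intro hb
        refine ⟨?_, hb⟩
        rw [← hrk b, hb, hr]
    · intro b hb
      simp only [hRk, hTk, Finset.mem_filter, Finset.mem_univ, true_and] at hb ⊢
      rw [hrk b]; exact hb
  rw [lhs_eq, Finset.mul_sum]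
  apply Finset.sum_congr rfl
  intro r hr
  rw [pushf_eq', pushf_eq']
  set Fr := Finset.univ.filter (fun p : β => φ p = r) with hFr
  obtain ⟨b0, hb0⟩ := hsurj r
  have hb0' : b0 ∈ Fr := by simp [hFr, hb0]
  -- column sums over Fq of g are constant on the fiber Fr
  have hconst : ∀ b ∈ Fr, (∑ p ∈ Fq, g p b) = ∑ p ∈ Fq, g p b0 := by
    intro b hb
    have hbr : φ b = φ b0 := by
      simp only [hFr, Finset.mem_filter, Finset.mem_univ, true_and] at hb
      rw [hb, hb0]
    have := hg.2 q b b0 hbr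
    rwa [finsum_cond', finsum_cond'] at this
  set A := ∑ p ∈ Fq, g p b0 with hA
  have e1 : (∑ b ∈ Fr, (∑ p ∈ Fq, g p b) * (∑ p' ∈ Fq', h b p')) =
      A * ∑ b ∈ Fr, ∑ p' ∈ Fq', h b p' := by
    rw [Finset.mul_sum]
    exact Finset.sum_congr rfl fun b hb => by rw [hconst b hb]
  have e2 : (∑ p ∈ Fq, ∑ b ∈ Fr, g p b) = (Fr.card : ℝ) * A := by
    rw [Finset.sum_comm]
    have : ∀ b ∈ Fr, (∑ p ∈ Fq, g p b) = A := hconst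
    rw [Finset.sum_congr rfl this, Finset.sum_const, nsmul_eq_mul]
  rw [e1, e2, card_fiber r, card_fiber q']
  have hr0 := fiber_ne r
  field_simp
  rw [← hFr, ← hFq']
  ring

end GramAngles
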